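/- Let k > 0 and a, b ∈ ℝ satisfy at least one of: (i) ab ≤ −a²; (ii) −a² < ab < a² and |a + b| < k; (iii) ab ≥ a² and 2·√|ab| < k. Then there exists a constant K > 0 depending only on a, b, k such that for every n ∈ ℕ there exists a constant C_n ≥ 0 with the following property: for every continuous input u : [0,∞) → ℝ, every ξ = (ξ_1,…,ξ_n) ∈ ℝ^n, and every solution (x_1,…,x_n) of the linear string x_i'(t) = a·x_{i−1}(t) − k·x_i(t) + b·x_{i+1}(t) (with x_0 := u, x_{n+1} := 0) and x_i(0) = ξ_i, one has ‖x_i‖_{[0,t],2} ≤ K·‖u‖_{[0,t],2} + C_n·(Σ_{j=1}^{n} ξ_j²)^{1/2} for all t ≥ 0 and all i = 1,…,n. -/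

import Mathlib

/-! Choose a weight `r ≥ 1` with `|a r + b / r| < k`; the three conditions on `a, b, k` say
precisely that such an `r` exists. The rescaled states `zᵢ = rⁱ xᵢ` again form a linear string, with
couplings `a r` and `b / r`, and its energy `V = ∑ zᵢ²` obeys the dissipation inequality
`V' ≤ -δ V + (a r)² / δ · u²` with `δ = k - |a r + b / r|`. Integrating it bounds `∫ zᵢ²`, and
since `r ≥ 1` the same bound holds for `∫ xᵢ²`; the weights only cost the factor `r²ⁿ` in front of
the initial energy. -/

/-- The `L²` norm of a real-valued signal on the interval `[0, t]`. -/
noncomputable def l2Norm (y : ℝ → ℝ) (t : ℝ) : ℝ :=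
  Real.sqrt (∫ s in (0:ℝ)..t, (y s) ^ 2)

open Finset

theorem sum_Icc_one_shift {M : Type*} [AddCommMonoid M] (f : ℕ → M) (n : ℕ) :
    ∑ i ∈ Icc 1 n, f (i + 1) + f 1 = ∑ i ∈ Icc 1 n, f i + f (n + 1) := by
  induction n with
  | zero => simp
  | succ n ih =>
    rw [sum_Icc_succ_top (by omega), sum_Icc_succ_top (by omega), add_right_comm, ih,
      add_right_comm]

theorem linearString_energy_rate_le {α β k δ : ℝ} (hδ : 0 < δ) (h : |α + β| ≤ k - δ) (n : ℕ)
    (z : ℕ → ℝ) (hz : z (n + 1) = 0) :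
    ∑ i ∈ Icc 1 n, 2 * z i * (α * z (i - 1) - k * z i + β * z (i + 1)) ≤
      -δ * ∑ i ∈ Icc 1 n, z i ^ 2 + α ^ 2 / δ * z 0 ^ 2 := by
  set S := ∑ i ∈ Icc 1 n, z i ^ 2
  set T := ∑ i ∈ Icc 1 n, z i * z (i + 1)
  have hpred : ∑ i ∈ Icc 1 n, z (i - 1) * z i = z 0 * z 1 + T := by
    have := sum_Icc_one_shift (fun i => z (i - 1) * z i) n
    simp only [Nat.add_sub_cancel, Nat.sub_self, hz, mul_zero, add_zero] at this
    linarith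
  have hsucc : ∑ i ∈ Icc 1 n, z (i + 1) ^ 2 + z 1 ^ 2 = S := by
    have := sum_Icc_one_shift (fun i => z i ^ 2) n
    rwa [hz, zero_pow two_ne_zero, add_zero] at this
  -- The couplings `α` and `β` of each pair of neighbours `i, i + 1 ≤ n` add up; only the
  -- input pair `0, 1` keeps `α` alone.
  have hexpand : ∑ i ∈ Icc 1 n, 2 * z i * (α * z (i - 1) - k * z i + β * z (i + 1)) =
      2 * α * (z 0 * z 1) + (α + β) * (2 * T) - 2 * k * S := by
    simp only [mul_add, mul_sub, sum_add_distrib, sum_sub_distrib]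
    simp only [show ∀ i, 2 * z i * (α * z (i - 1)) = 2 * α * (z (i - 1) * z i) from
        fun i => by ring,
      show ∀ i, 2 * z i * (k * z i) = 2 * k * z i ^ 2 from fun i => by ring,
      show ∀ i, 2 * z i * (β * z (i + 1)) = 2 * β * (z i * z (i + 1)) from fun i => by ring,
      ← mul_sum, hpred]
    ring
  have hcoupling : (α + β) * (2 * T) ≤ |α + β| * (2 * S - z 1 ^ 2) := by
    have hT : |2 * T| ≤ 2 * S - z 1 ^ 2 := by
      calc |2 * T| ≤ ∑ i ∈ Icc 1 n, |2 * (z i * z (i + 1))| := by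
            rw [mul_sum]; exact abs_sum_le_sum_abs _ _
        _ ≤ ∑ i ∈ Icc 1 n, (z i ^ 2 + z (i + 1) ^ 2) := by
            gcongr with i
            rw [← mul_assoc]
            exact abs_le.mpr ⟨by nlinarith [sq_nonneg (z i + z (i + 1))],
              two_mul_le_add_sq _ _⟩
        _ = 2 * S - z 1 ^ 2 := by rw [sum_add_distrib]; linarith
    exact (le_abs_self _).trans (abs_mul _ (2 * T) ▸ mul_le_mul_of_nonneg_left hT (abs_nonneg _))
  have hinput : 2 * α * (z 0 * z 1) ≤ δ * z 1 ^ 2 + α ^ 2 / δ * z 0 ^ 2 := by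
    have := two_mul_le_add_mul_sq (a := z 1) (b := α * z 0) hδ
    rw [div_eq_inv_mul]
    linarith
  have hz1 : z 1 ^ 2 ≤ S := by
    rw [← hsucc]; exact le_add_of_nonneg_left (sum_nonneg fun i _ => sq_nonneg _)
  rw [hexpand]
  nlinarith [abs_nonneg (α + β), mul_le_mul_of_nonneg_right h (sub_nonneg.2 hz1)]

theorem integral_add_le_of_hasDerivAt_le {V V' g : ℝ → ℝ} {δ a b : ℝ} (hab : a ≤ b)
    (hV : ∀ s ∈ Set.Icc a b, HasDerivAt V (V' s) s) (hg : ContinuousOn g (Set.Icc a b))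
    (hdiss : ∀ s ∈ Set.Ioo a b, V' s ≤ -δ * V s + g s) :
    V b + δ * (∫ s in a..b, V s) ≤ V a + ∫ s in a..b, g s := by
  have hVcont : ContinuousOn V (Set.Icc a b) :=
    fun s hs => (hV s hs).continuousAt.continuousWithinAt
  have hint : ∫ s in a..b, (δ * V s - g s) ≤ -V b - -V a :=
    intervalIntegral.integral_le_sub_of_hasDeriv_right_of_le hab hVcont.neg
      (fun s hs => (hV s (Set.Ioo_subset_Icc_self hs)).neg.hasDerivWithinAt)
      ((hVcont.const_smul δ).sub hg |>.integrableOn_Icc)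
      (fun s hs => by linarith [hdiss s hs])
  rw [intervalIntegral.integral_sub, intervalIntegral.integral_const_mul] at hint
  · linarith
  · exact (hVcont.const_smul δ).intervalIntegrable_of_Icc hab
  · exact hg.intervalIntegrable_of_Icc hab

theorem l2Norm_le_of_integral_sq_le {y u : ℝ → ℝ} {t A B : ℝ} (ht : 0 ≤ t) (hA : 0 ≤ A)
    (hB : 0 ≤ B) (h : ∫ s in (0:ℝ)..t, y s ^ 2 ≤ A * (∫ s in (0:ℝ)..t, u s ^ 2) + B) :
    l2Norm y t ≤ √A * l2Norm u t + √B := by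
  have hU : 0 ≤ ∫ s in (0:ℝ)..t, u s ^ 2 :=
    intervalIntegral.integral_nonneg ht fun s _ => sq_nonneg _
  simp only [l2Norm]
  rw [Real.sqrt_le_left (by positivity), add_sq, mul_pow, Real.sq_sqrt hA,
    Real.sq_sqrt hU, Real.sq_sqrt hB]
  have : 0 ≤ 2 * (√A * √(∫ s in (0:ℝ)..t, u s ^ 2)) * √B := by positivity
  linarith

theorem exists_one_le_abs_div_lt {k : ℝ} (hk : 0 < k) (b : ℝ) :
    ∃ r : ℝ, 1 ≤ r ∧ |b / r| < k := by
  have hlim : Filter.Tendsto (fun r : ℝ => |b / r|) Filter.atTop (nhds 0) := by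
    simpa using ((tendsto_const_nhds (x := b)).div_atTop Filter.tendsto_id).abs
  exact ((Filter.eventually_ge_atTop 1).and (hlim.eventually_lt_const hk)).exists

theorem one_le_sqrt_neg_div_of_mul_le {a b : ℝ} (ha : a ≠ 0) (h : a * b ≤ -a ^ 2) :
    1 ≤ √(-b / a) ∧ a * √(-b / a) + b / √(-b / a) = 0 := by
  have hμ : 1 ≤ -b / a := by
    rw [show -b / a = -(a * b) / a ^ 2 by field_simp, one_le_div (by positivity)]
    linarith
  have hr : 0 < √(-b / a) := by positivity
  refine ⟨Real.one_le_sqrt.mpr hμ, ?_⟩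
  rw [← mul_right_cancel_iff_of_pos hr, add_mul, div_mul_cancel₀ _ hr.ne', mul_assoc,
    Real.mul_self_sqrt (by linarith)]
  field_simp
  ring

theorem one_le_sqrt_div_of_le_mul {a b : ℝ} (ha : a ≠ 0) (h : a ^ 2 ≤ a * b) :
    1 ≤ √(b / a) ∧ |a * √(b / a) + b / √(b / a)| = 2 * √|a * b| := by
  have hab : 0 ≤ a * b := (sq_nonneg a).trans h
  have hμ : 1 ≤ b / a := by
    rw [show b / a = a * b / a ^ 2 by field_simp, one_le_div (by positivity)]
    exact h
  have hr : 0 < √(b / a) := by positivity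
  refine ⟨Real.one_le_sqrt.mpr hμ, ?_⟩
  have hsum : a * √(b / a) + b / √(b / a) = 2 * b / √(b / a) := by
    rw [eq_div_iff hr.ne', add_mul, div_mul_cancel₀ _ hr.ne', mul_assoc,
      Real.mul_self_sqrt (by linarith)]
    field_simp
    ring
  have hprod : √|a * b| * √(b / a) = |b| := by
    rw [← Real.sqrt_mul (abs_nonneg _), abs_of_nonneg hab,
      show a * b * (b / a) = b ^ 2 by field_simp, Real.sqrt_sq_eq_abs]
  rw [hsum, abs_div, abs_of_pos hr, abs_mul, abs_two, ← hprod]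
  field_simp

theorem exists_one_le_abs_mul_add_div_lt {k a b : ℝ} (hk : 0 < k)
    (hcond : (a * b ≤ -a ^ 2) ∨
      (-a ^ 2 < a * b ∧ a * b < a ^ 2 ∧ |a + b| < k) ∨
      (a ^ 2 ≤ a * b ∧ 2 * Real.sqrt |a * b| < k)) :
    ∃ r : ℝ, 1 ≤ r ∧ |a * r + b / r| < k := by
  rcases eq_or_ne a 0 with rfl | ha
  · simpa using exists_one_le_abs_div_lt hk b
  rcases hcond with h | ⟨-, -, h⟩ | ⟨h, hk'⟩
  · obtain ⟨hr, hzero⟩ := one_le_sqrt_neg_div_of_mul_le ha h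
    exact ⟨_, hr, by rwa [hzero, abs_zero]⟩
  · exact ⟨1, le_rfl, by simpa using h⟩
  · obtain ⟨hr, heq⟩ := one_le_sqrt_div_of_le_mul ha h
    exact ⟨_, hr, heq ▸ hk'⟩

def IsLinearString (a k b : ℝ) (n : ℕ) (x : ℕ → ℝ → ℝ) : Prop :=
  ∀ i ∈ Icc 1 n, ∀ t ≥ (0:ℝ), HasDerivAt (x i) (a * x (i - 1) t - k * x i t + b * x (i + 1) t) t

namespace IsLinearString

variable {a k b : ℝ} {n : ℕ} {x : ℕ → ℝ → ℝ}

theorem continuousOn (hx : IsLinearString a k b n x) {i : ℕ} (hi : i ∈ Icc 1 n) :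
    ContinuousOn (x i) (Set.Ici 0) :=
  fun t ht => (hx i hi t ht).continuousAt.continuousWithinAt

theorem rescale {r : ℝ} (hr : r ≠ 0) (hx : IsLinearString a k b n x) :
    IsLinearString (a * r) k (b / r) n (fun i t => r ^ i * x i t) := by
  intro i hi t ht
  obtain ⟨j, rfl⟩ : ∃ j, i = j + 1 := ⟨i - 1, by grind⟩
  refine ((hx _ hi t ht).const_mul (r ^ (j + 1))).congr_deriv ?_
  simp only [Nat.add_sub_cancel]
  field_simp
  ring

theorem energy_le {δ : ℝ} (hδ : 0 < δ) (h : |a + b| ≤ k - δ) (hx : IsLinearString a k b n x)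
    (hxn : ∀ t, x (n + 1) t = 0) (hu : ContinuousOn (x 0) (Set.Ici 0)) {t : ℝ} (ht : 0 ≤ t) :
    δ * ∫ s in (0:ℝ)..t, ∑ i ∈ Icc 1 n, x i s ^ 2 ≤
      ∑ i ∈ Icc 1 n, x i 0 ^ 2 + a ^ 2 / δ * ∫ s in (0:ℝ)..t, x 0 s ^ 2 := by
  have hV : ∀ s ∈ Set.Icc 0 t, HasDerivAt (fun s => ∑ i ∈ Icc 1 n, x i s ^ 2)
      (∑ i ∈ Icc 1 n, 2 * x i s * (a * x (i - 1) s - k * x i s + b * x (i + 1) s)) s := by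
    intro s hs
    refine HasDerivAt.fun_sum fun i hi => ?_
    refine ((hx i hi s hs.1).pow 2).congr_deriv ?_
    push_cast
    ring
  have hg : ContinuousOn (fun s => a ^ 2 / δ * x 0 s ^ 2) (Set.Icc 0 t) :=
    continuousOn_const.mul ((hu.mono Set.Icc_subset_Ici_self).pow 2)
  have := integral_add_le_of_hasDerivAt_le ht hV hg
    fun s _ => linearString_energy_rate_le hδ h n (fun i => x i s) (hxn s)
  rw [intervalIntegral.integral_const_mul] at this
  have hVt : 0 ≤ ∑ i ∈ Icc 1 n, x i t ^ 2 := sum_nonneg fun i _ => sq_nonneg _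
  linarith

theorem integral_sq_le {r δ : ℝ} (hr : 1 ≤ r) (hδ : 0 < δ) (hk : |a * r + b / r| ≤ k - δ)
    (hx : IsLinearString a k b n x) (hxn : ∀ t, x (n + 1) t = 0)
    (hu : ContinuousOn (x 0) (Set.Ici 0)) {i : ℕ} (hi : i ∈ Icc 1 n) {t : ℝ} (ht : 0 ≤ t) :
    ∫ s in (0:ℝ)..t, x i s ^ 2 ≤
      (a * r) ^ 2 / δ ^ 2 * (∫ s in (0:ℝ)..t, x 0 s ^ 2) +
        (r ^ 2) ^ n / δ * ∑ j ∈ Icc 1 n, x j 0 ^ 2 := by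
  have hr0 : r ≠ 0 := by positivity
  have hz := hx.rescale hr0
  have henergy := hz.energy_le hδ hk (by simp [hxn]) (by simpa using hu) ht
  simp only [pow_zero, one_mul] at henergy
  have hcont : ContinuousOn (fun s => ∑ j ∈ Icc 1 n, (r ^ j * x j s) ^ 2) (Set.Icc 0 t) :=
    continuousOn_finsetSum _ fun j hj =>
      (continuousOn_const.mul ((hx.continuousOn hj).mono Set.Icc_subset_Ici_self)).pow 2
  have hcomp :
      ∫ s in (0:ℝ)..t, x i s ^ 2 ≤ ∫ s in (0:ℝ)..t, ∑ j ∈ Icc 1 n, (r ^ j * x j s) ^ 2 := by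
    refine intervalIntegral.integral_mono_on ht
      ((((hx.continuousOn hi).mono Set.Icc_subset_Ici_self).pow 2).intervalIntegrable_of_Icc ht)
      (hcont.intervalIntegrable_of_Icc ht) fun s _ => ?_
    calc x i s ^ 2 ≤ (r ^ i * x i s) ^ 2 := by
          rw [mul_pow]; exact le_mul_of_one_le_left (sq_nonneg _) (one_le_pow₀ (one_le_pow₀ hr))
      _ ≤ ∑ j ∈ Icc 1 n, (r ^ j * x j s) ^ 2 :=
          single_le_sum (f := fun j => (r ^ j * x j s) ^ 2) (fun j _ => sq_nonneg _) hi
  have hinit : ∑ j ∈ Icc 1 n, (r ^ j * x j 0) ^ 2 ≤ (r ^ 2) ^ n * ∑ j ∈ Icc 1 n, x j 0 ^ 2 := by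
    rw [mul_sum]
    gcongr with j hj
    rw [mul_pow, ← pow_mul, mul_comm j, pow_mul]
    gcongr
    exacts [one_le_pow₀ hr, (mem_Icc.1 hj).2]
  have hscaled :=
    (mul_le_mul_of_nonneg_left hcomp hδ.le).trans (henergy.trans (add_le_add_left hinit _))
  rw [← mul_le_mul_iff_of_pos_left hδ]
  convert hscaled using 1
  field_simp
  ring

end IsLinearString

theorem linear_string_lyapunov_one_sided (k a b : ℝ) (hk : 0 < k)
    (hcond : (a * b ≤ -a ^ 2) ∨
      (-a ^ 2 < a * b ∧ a * b < a ^ 2 ∧ |a + b| < k) ∨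
      (a ^ 2 ≤ a * b ∧ 2 * Real.sqrt |a * b| < k)) :
    ∃ K : ℝ, 0 < K ∧ ∀ n : ℕ, ∃ C : ℝ, 0 ≤ C ∧
      ∀ u : ℝ → ℝ, ContinuousOn u (Set.Ici 0) →
      ∀ ξ : ℕ → ℝ, ∀ x : ℕ → ℝ → ℝ,
        (∀ t, x 0 t = u t) → (∀ t, x (n + 1) t = 0) →
        (∀ i, 1 ≤ i → i ≤ n → x i 0 = ξ i ∧
          ∀ t ≥ (0:ℝ), HasDerivAt (x i)
            (a * x (i - 1) t - k * x i t + b * x (i + 1) t) t) →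
        ∀ i, 1 ≤ i → i ≤ n → ∀ t ≥ (0:ℝ),
          l2Norm (x i) t ≤
            K * l2Norm u t + C * Real.sqrt (∑ j ∈ Finset.Icc 1 n, (ξ j) ^ 2) := by
  obtain ⟨r, hr1, hr⟩ := exists_one_le_abs_mul_add_div_lt hk hcond
  obtain ⟨δ, hδ, hrδ⟩ : ∃ δ, 0 < δ ∧ |a * r + b / r| ≤ k - δ :=
    ⟨k - |a * r + b / r|, sub_pos.2 hr, by rw [sub_sub_cancel]⟩
  refine ⟨√((a * r) ^ 2 / δ ^ 2) + 1, by positivity,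
    fun n => ⟨√((r ^ 2) ^ n / δ), Real.sqrt_nonneg _, ?_⟩⟩
  intro u hu ξ x hx0 hxn hx i hi1 hin t ht
  have hstring : IsLinearString a k b n x :=
    fun j hj => (hx j (mem_Icc.1 hj).1 (mem_Icc.1 hj).2).2
  have hinit : ∑ j ∈ Icc 1 n, x j 0 ^ 2 = ∑ j ∈ Icc 1 n, ξ j ^ 2 :=
    sum_congr rfl fun j hj => by rw [(hx j (mem_Icc.1 hj).1 (mem_Icc.1 hj).2).1]
  have hux : x 0 = u := funext hx0
  have hbound := hstring.integral_sq_le hr1 hδ hrδ hxn (hux ▸ hu) (mem_Icc.2 ⟨hi1, hin⟩) ht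
  rw [hinit, hux] at hbound
  calc l2Norm (x i) t
      ≤ √((a * r) ^ 2 / δ ^ 2) * l2Norm u t + √((r ^ 2) ^ n / δ * ∑ j ∈ Icc 1 n, ξ j ^ 2) :=
        l2Norm_le_of_integral_sq_le ht (by positivity) (by positivity) hbound
    _ ≤ _ := by
        rw [Real.sqrt_mul (by positivity)]
        have hu0 : 0 ≤ l2Norm u t := Real.sqrt_nonneg _
        nlinarith
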